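/- arXiv:1610.07315 — 8 statements merged into one kernel-verified Lean document; each statement's English description precedes it below -/
import Mathlib

section
/- The union of all downward closed subsets of ℕ₀^d of cardinality at most n equals the hyperbolic cross set H_n^d = {μ ∈ ℕ₀^d : ∏_{j=1}^d (μ_j + 1) ≤ n}. -/
/-- A finite set `Λ ⊆ ℕ₀^d` is downward closed if `ν ∈ Λ` and `μ ≤ ν` imply `μ ∈ Λ`. -/
def DownwardClosed {d : ℕ} (Λ : Finset (Fin d → ℕ)) : Prop :=
  ∀ ν ∈ Λ, ∀ μ : Fin d → ℕ, μ ≤ ν → μ ∈ Λ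

/-- The union of all downward closed subsets of `ℕ₀^d` of cardinality at most `n`
equals the hyperbolic cross `H_n^d = {μ : ∏ j (μ j + 1) ≤ n}`. -/
theorem union_downwardClosed_eq_hyperbolicCross (d n : ℕ) (μ : Fin d → ℕ) :
    (∃ Λ : Finset (Fin d → ℕ), DownwardClosed Λ ∧ Λ.card ≤ n ∧ μ ∈ Λ) ↔
      ∏ j, (μ j + 1) ≤ n := by
  have hmem : ∀ ν : Fin d → ℕ,
      ν ∈ Fintype.piFinset (fun j => Finset.range (μ j + 1)) ↔ ν ≤ μ := by
    intro ν
    simp [Fintype.mem_piFinset, Nat.lt_succ_iff, Pi.le_def]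
  have hcard : (Fintype.piFinset (fun j => Finset.range (μ j + 1))).card
      = ∏ j, (μ j + 1) := by
    simp [Fintype.card_piFinset]
  constructor
  · rintro ⟨Λ, hDC, hcardΛ, hμ⟩
    calc ∏ j, (μ j + 1)
        = (Fintype.piFinset (fun j => Finset.range (μ j + 1))).card := hcard.symm
      _ ≤ Λ.card := Finset.card_le_card (fun ν hν => hDC μ hμ ν ((hmem ν).1 hν))
      _ ≤ n := hcardΛ
  · intro h
    refine ⟨Fintype.piFinset (fun j => Finset.range (μ j + 1)), ?_, ?_, ?_⟩
    · intro ν hν τ hτ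
      exact (hmem τ).2 (le_trans hτ ((hmem ν).1 hν))
    · rw [hcard]; exact h
    · exact (hmem μ).2 le_rfl
end

section
/- For every n ≥ 1 and d ≥ 1, the cardinality of the hyperbolic cross H_n^d = {μ ∈ ℕ₀^d : ∏_{j=1}^d (μ_j+1) ≤ n} satisfies #(H_n^d) ≤ n (1 + ln n)^{d-1}. -/
/-!
Splitting the hyperbolic cross according to the first coordinate `k` gives the recursion
`#H_n^{d+1} = ∑_{k < n} #H_{⌊n/(k+1)⌋}^d`. Since `∑_{k < n} ⌊n/(k+1)⌋ ≤ n · harmonic n ≤ n (1 + ln n)`,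
each extra dimension costs at most a factor `1 + ln n`.
-/

open Finset

def hyperbolicCross (d n : ℕ) : Finset (Fin d → ℕ) :=
  {μ ∈ Fintype.piFinset fun _ => range n | ∏ j, (μ j + 1) ≤ n}

theorem mem_hyperbolicCross {d n : ℕ} {μ : Fin d → ℕ} :
    μ ∈ hyperbolicCross d n ↔ ∏ j, (μ j + 1) ≤ n := by
  simp only [hyperbolicCross, mem_filter, Fintype.mem_piFinset, mem_range, and_iff_right_iff_imp]
  intro h j
  exact (single_le_prod' (fun i _ => Nat.le_add_left 1 (μ i)) (mem_univ j)).trans h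

theorem filter_hyperbolicCross_succ_eq_map_cons (d n k : ℕ) :
    {μ ∈ hyperbolicCross (d + 1) n | μ 0 = k} =
      (hyperbolicCross d (n / (k + 1))).map ⟨Fin.cons k, Fin.cons_right_injective (α := fun _ => ℕ) k⟩ := by
  ext μ
  simp only [mem_filter, mem_map, Function.Embedding.coeFn_mk, mem_hyperbolicCross,
    Nat.le_div_iff_mul_le k.succ_pos]
  constructor
  · rintro ⟨hμ, rfl⟩
    refine ⟨Fin.tail μ, ?_, Fin.cons_self_tail μ⟩
    rw [Fin.prod_univ_succ, mul_comm] at hμ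
    exact hμ
  · rintro ⟨ν, hν, rfl⟩
    rw [Fin.prod_univ_succ, mul_comm]
    exact ⟨hν, rfl⟩

theorem card_hyperbolicCross_succ (d n : ℕ) :
    #(hyperbolicCross (d + 1) n) = ∑ k ∈ range n, #(hyperbolicCross d (n / (k + 1))) := by
  have hfirst : ∀ μ ∈ hyperbolicCross (d + 1) n, μ 0 ∈ range n := fun μ hμ =>
    Fintype.mem_piFinset.mp (mem_filter.mp hμ).1 0
  rw [card_eq_sum_card_fiberwise hfirst]
  simp only [filter_hyperbolicCross_succ_eq_map_cons, card_map]

theorem sum_range_div_succ_le (n : ℕ) :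
    ∑ k ∈ range n, ((n / (k + 1) : ℕ) : ℝ) ≤ n * (1 + Real.log n) :=
  calc ∑ k ∈ range n, ((n / (k + 1) : ℕ) : ℝ)
      ≤ ∑ k ∈ range n, (n : ℝ) * ((k + 1 : ℕ) : ℝ)⁻¹ :=
        sum_le_sum fun _ _ => by simpa only [div_eq_mul_inv] using Nat.cast_div_le
    _ = n * harmonic n := by simp [harmonic, mul_sum]
    _ ≤ n * (1 + Real.log n) := by gcongr; exact harmonic_le_one_add_log n

theorem card_hyperbolicCross_succ_le (d : ℕ) {n N : ℕ} (hnN : n ≤ N) :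
    (#(hyperbolicCross (d + 1) n) : ℝ) ≤ n * (1 + Real.log N) ^ d := by
  induction d generalizing n with
  | zero =>
    rw [card_hyperbolicCross_succ, pow_zero, mul_one]
    exact_mod_cast (sum_le_card_nsmul _ _ 1 fun _ _ => card_le_one_of_subsingleton _).trans
      (by simp)
  | succ d ih =>
    have hlog : (n : ℝ) * (1 + Real.log n) ≤ n * (1 + Real.log N) := by
      rcases n.eq_zero_or_pos with rfl | hn
      · simp
      · gcongr
    calc (#(hyperbolicCross (d + 2) n) : ℝ)
        = ∑ k ∈ range n, (#(hyperbolicCross (d + 1) (n / (k + 1))) : ℝ) := by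
          rw [card_hyperbolicCross_succ, Nat.cast_sum]
      _ ≤ ∑ k ∈ range n, ((n / (k + 1) : ℕ) : ℝ) * (1 + Real.log N) ^ d :=
          sum_le_sum fun _ _ => ih ((Nat.div_le_self _ _).trans hnN)
      _ ≤ n * (1 + Real.log N) * (1 + Real.log N) ^ d := by
          rw [← sum_mul]; gcongr; exact (sum_range_div_succ_le n).trans hlog
      _ = n * (1 + Real.log N) ^ (d + 1) := by ring

theorem card_hyperbolicCross_le_general (d n : ℕ) (hd : 1 ≤ d)
    (H : Finset (Fin d → ℕ)) (hH : ∀ μ : Fin d → ℕ, μ ∈ H ↔ ∏ j, (μ j + 1) ≤ n) :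
    (H.card : ℝ) ≤ n * (1 + Real.log n) ^ (d - 1) := by
  obtain ⟨e, rfl⟩ : ∃ e, d = e + 1 := ⟨d - 1, by omega⟩
  obtain rfl : H = hyperbolicCross (e + 1) n :=
    ext fun μ => (hH μ).trans mem_hyperbolicCross.symm
  simpa using card_hyperbolicCross_succ_le e le_rfl

/-- For `n ≥ 1` and `d ≥ 1`, the cardinality of the hyperbolic cross
`H_n^d = {μ ∈ ℕ₀^d : ∏ j (μ j + 1) ≤ n}` satisfies `#(H_n^d) ≤ n (1 + ln n)^(d-1)`. -/
theorem card_hyperbolicCross_le (d n : ℕ) (hd : 1 ≤ d) (hn : 1 ≤ n)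
    (H : Finset (Fin d → ℕ)) (hH : ∀ μ : Fin d → ℕ, μ ∈ H ↔ ∏ j, (μ j + 1) ≤ n) :
    (H.card : ℝ) ≤ n * (1 + Real.log n) ^ (d - 1) :=
  card_hyperbolicCross_le_general d n hd H hH
end

section
/- The number of downward closed subsets of ℕ₀^d of cardinality exactly n is at most 2^{nd}. -/
/-!
Enumerate a downward closed set `Λ` lexicographically and record, for the element of rank `r`
and each direction `j`, whether `ν + e_j ∈ Λ`: an `n × d` bit matrix. It determines `Λ`,
since every `x ≠ 0` is `μ + e_j` for some `μ ≤ x`, which comes earlier in the lexicographic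
order; so the membership of `x` is read off the bit `(rank μ, j)` once `Λ` is known below `x`.
-/

open Finset

section Rank

variable {α β : Type*} [LinearOrder β] (f : α → β) {s t : Finset α} {a b : α}

def rank (s : Finset α) (a : α) : ℕ := #{b ∈ s | f b < f a}

theorem rank_lt_card (ha : a ∈ s) : rank f s a < #s :=
  card_lt_card <| filter_ssubset.2 ⟨a, ha, lt_irrefl _⟩

theorem rank_lt_rank (ha : a ∈ s) (hab : f a < f b) : rank f s a < rank f s b :=
  card_lt_card <| (ssubset_iff_of_subset fun _ hc =>
    mem_filter.2 ⟨(mem_filter.1 hc).1, (mem_filter.1 hc).2.trans hab⟩).2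
      ⟨a, mem_filter.2 ⟨ha, hab⟩, fun h => lt_irrefl _ (mem_filter.1 h).2⟩

theorem rank_injOn {f : α → β} (hf : Function.Injective f) : Set.InjOn (rank f s) s := by
  intro a ha b hb hab
  by_contra hne
  rcases lt_or_gt_of_ne (hf.ne hne) with h | h
  · exact (rank_lt_rank f ha h).ne hab
  · exact (rank_lt_rank f hb h).ne' hab

theorem rank_congr (h : ∀ b, f b < f a → (b ∈ s ↔ b ∈ t)) : rank f s a = rank f t a :=
  congrArg card <| ext fun b => by simpa only [mem_filter] using and_congr_left (h b)

end Rank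

variable {d : ℕ} {Λ Λ' : Finset (Fin d → ℕ)}

theorem DownwardClosed.zero_mem (hΛ : DownwardClosed Λ) (hne : Λ.Nonempty) : 0 ∈ Λ :=
  let ⟨ν, hν⟩ := hne
  hΛ ν hν 0 zero_le

theorem exists_add_single_eq_of_ne_zero {x : Fin d → ℕ} (hx : x ≠ 0) :
    ∃ (μ : Fin d → ℕ) (j : Fin d), μ + Pi.single j 1 = x := by
  obtain ⟨j, hj⟩ := Function.ne_iff.1 hx
  refine ⟨x - Pi.single j 1, j, tsub_add_cancel_of_le ?_⟩
  intro i
  rcases eq_or_ne i j with rfl | hij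
  · simpa using Nat.one_le_iff_ne_zero.2 hj
  · simp [Pi.single_eq_of_ne hij]

/-- The positions `(r, j)` of the ones in the paper's `n × d` bit matrix, where row `r` belongs
to the element of lexicographic rank `r` in `Λ`. -/
noncomputable def stepCode (Λ : Finset (Fin d → ℕ)) : Finset (ℕ × Fin d) :=
  {p ∈ Λ ×ˢ (univ : Finset (Fin d)) | p.1 + Pi.single p.2 1 ∈ Λ}.image
    fun p => (rank toLex Λ p.1, p.2)

theorem mem_stepCode {r : ℕ} {j : Fin d} :
    (r, j) ∈ stepCode Λ ↔ ∃ ν ∈ Λ, ν + Pi.single j 1 ∈ Λ ∧ rank toLex Λ ν = r := by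
  simp only [stepCode, mem_image, mem_filter, mem_product, mem_univ, and_true, Prod.exists,
    Prod.mk.injEq]
  constructor
  · rintro ⟨ν, j, ⟨hν, hνj⟩, rfl, rfl⟩
    exact ⟨ν, hν, hνj, rfl⟩
  · rintro ⟨ν, hν, hνj, rfl⟩
    exact ⟨ν, j, ⟨hν, hνj⟩, rfl, rfl⟩

theorem stepCode_subset : stepCode Λ ⊆ range #Λ ×ˢ univ := by
  rintro ⟨r, j⟩ h
  obtain ⟨ν, hν, -, rfl⟩ := mem_stepCode.1 h
  exact mem_product.2 ⟨mem_range.2 (rank_lt_card _ hν), mem_univ j⟩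

theorem DownwardClosed.mem_of_stepCode_eq (hΛ : DownwardClosed Λ) (hΛ' : DownwardClosed Λ')
    (hne : Λ'.Nonempty) (hcode : stepCode Λ = stepCode Λ') {x : Fin d → ℕ} (hx : x ∈ Λ)
    (hbelow : ∀ y, toLex y < toLex x → (y ∈ Λ ↔ y ∈ Λ')) : x ∈ Λ' := by
  rcases eq_or_ne x 0 with rfl | hx0
  · exact hΛ'.zero_mem hne
  obtain ⟨μ, j, rfl⟩ := exists_add_single_eq_of_ne_zero hx0
  have hμx : toLex μ < toLex (μ + Pi.single j 1) :=
    Pi.toLex_strictMono (lt_add_of_pos_right μ (by simp))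
  have hμ : μ ∈ Λ := hΛ _ hx μ le_self_add
  have hμ' : μ ∈ Λ' := (hbelow μ hμx).1 hμ
  have hrank : rank toLex Λ μ = rank toLex Λ' μ :=
    rank_congr _ fun y hy => hbelow y (hy.trans hμx)
  obtain ⟨ν, hν, hνj, hνμ⟩ := mem_stepCode.1 (hcode ▸ mem_stepCode.2 ⟨μ, hμ, hx, hrank⟩)
  rwa [rank_injOn toLex.injective hν hμ' hνμ] at hνj

theorem DownwardClosed.eq_of_stepCode_eq (hΛ : DownwardClosed Λ) (hΛ' : DownwardClosed Λ')
    (hcard : #Λ = #Λ') (hcode : stepCode Λ = stepCode Λ') : Λ = Λ' := by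
  suffices h : ∀ a : Lex (Fin d → ℕ), ofLex a ∈ Λ ↔ ofLex a ∈ Λ' from ext fun x => h (toLex x)
  intro a
  induction a using WellFoundedLT.induction with
  | _ a ih =>
    have hbelow : ∀ y, toLex y < a → (y ∈ Λ ↔ y ∈ Λ') := fun y hy => ih (toLex y) hy
    constructor
    · intro ha
      have hne : Λ'.Nonempty := card_pos.1 (hcard ▸ card_pos.2 ⟨_, ha⟩)
      exact hΛ.mem_of_stepCode_eq hΛ' hne hcode ha hbelow
    · intro ha
      have hne : Λ.Nonempty := card_pos.1 (hcard ▸ card_pos.2 ⟨_, ha⟩)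
      exact hΛ'.mem_of_stepCode_eq hΛ hne hcode.symm ha fun y hy => (hbelow y hy).symm

/-- The number of downward closed subsets of `ℕ₀^d` of cardinality exactly `n`
is at most `2^(n d)`. -/
theorem card_downwardClosed_le_pow (d n : ℕ) :
    Nat.card {Λ : Finset (Fin d → ℕ) // DownwardClosed Λ ∧ Λ.card = n} ≤ 2 ^ (n * d) := by
  let codes := (range n ×ˢ (univ : Finset (Fin d))).powerset
  let encode (Λ : {Λ : Finset (Fin d → ℕ) // DownwardClosed Λ ∧ Λ.card = n}) : codes :=
    ⟨stepCode Λ.1, mem_powerset.2 (by simpa only [Λ.2.2] using stepCode_subset (Λ := Λ.1))⟩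
  have hencode : Function.Injective encode := fun Λ Λ' h => Subtype.ext <|
    Λ.2.1.eq_of_stepCode_eq Λ'.2.1 (Λ.2.2.trans Λ'.2.2.symm) (congrArg Subtype.val h)
  calc Nat.card {Λ : Finset (Fin d → ℕ) // DownwardClosed Λ ∧ Λ.card = n}
      ≤ Nat.card codes := Nat.card_le_card_of_injective encode hencode
    _ = 2 ^ (n * d) := by
      rw [Nat.card_eq_finsetCard, card_powerset, card_product, card_range, card_univ,
        Fintype.card_fin, pow_mul]
end

section
/- The number of downward closed subsets of ℕ₀^d of cardinality exactly n is at most d^{n−1} (n−1)!. -/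
/-!
Removing a maximal element `ν ≠ 0` from a downward closed set `Λ` with `#Λ = n + 1` leaves a
downward closed set `Λ'` with `#Λ' = n`, and `ν = μ + e_j` for some `μ ∈ Λ'` and some coordinate
`j`. Hence `Λ` is determined by `(Λ', μ, j)`, which takes at most `N(n) · n · d` values, where
`N(n)` is the number of downward closed sets of size `n`; since `N(1) = 1`, induction gives
`N(n + 1) ≤ d ^ n * n !`.
-/

open Finset
open scoped Nat

abbrev DownwardClosedOfCard (d n : ℕ) : Type :=
  {Λ : Finset (Fin d → ℕ) // DownwardClosed Λ ∧ #Λ = n}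

namespace DownwardClosed

variable {d : ℕ} {Λ : Finset (Fin d → ℕ)}

theorem zero_mem_s7 (hΛ : DownwardClosed Λ) (hne : Λ.Nonempty) : 0 ∈ Λ :=
  let ⟨ν, hν⟩ := hne
  hΛ ν hν 0 zero_le

theorem eq_singleton_zero (hΛ : DownwardClosed Λ) (h : #Λ = 1) : Λ = {0} := by
  obtain ⟨a, rfl⟩ := card_eq_one.mp h
  rw [mem_singleton.mp (hΛ.zero_mem_s7 (singleton_nonempty a))]

theorem erase_of_maximal (hΛ : DownwardClosed Λ) {ν : Fin d → ℕ} (hν : Maximal (· ∈ Λ) ν) :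
    DownwardClosed (Λ.erase ν) := by
  intro a ha b hba
  rw [mem_erase] at ha ⊢
  refine ⟨?_, hΛ a ha.2 b hba⟩
  rintro rfl
  exact ha.1 (le_antisymm (hν.2 ha.2 hba) hba)

theorem exists_eq_insert_add_single (hΛ : DownwardClosed Λ) (h : 1 < #Λ) :
    ∃ Λ', DownwardClosed Λ' ∧ #Λ' + 1 = #Λ ∧
      ∃ μ ∈ Λ', ∃ j : Fin d, insert (μ + Pi.single j 1) Λ' = Λ := by
  obtain ⟨b, hb, hb0⟩ := exists_mem_ne h 0
  obtain ⟨ν, hbν, hν⟩ := Λ.exists_le_maximal hb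
  obtain ⟨j, hj⟩ : ∃ j, ν j ≠ 0 := by
    by_contra! hzero
    exact hb0 (le_antisymm (hbν.trans fun i => (hzero i).le) zero_le)
  have hsingle : Pi.single j 1 ≤ ν := fun i => by
    rcases eq_or_ne i j with rfl | hij
    · simpa [Nat.one_le_iff_ne_zero] using hj
    · simp [hij]
  have hμν : ν - Pi.single j 1 + Pi.single j 1 = ν := tsub_add_cancel_of_le hsingle
  have hμ : ν - Pi.single j 1 ∈ Λ.erase ν := by
    refine mem_erase.mpr ⟨fun heq => ?_, hΛ ν hν.1 _ tsub_le_self⟩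
    have := congrFun (hμν.trans heq.symm) j
    simp at this
  refine ⟨Λ.erase ν, hΛ.erase_of_maximal hν, card_erase_add_one hν.1, _, hμ, j, ?_⟩
  rw [hμν, insert_erase hν.1]

end DownwardClosed

namespace DownwardClosedOfCard

instance subsingleton_zero (d : ℕ) : Subsingleton (DownwardClosedOfCard d 0) :=
  ⟨fun Λ₁ Λ₂ => Subtype.ext <| (card_eq_zero.mp Λ₁.2.2).trans (card_eq_zero.mp Λ₂.2.2).symm⟩

instance subsingleton_one (d : ℕ) : Subsingleton (DownwardClosedOfCard d 1) :=
  ⟨fun Λ₁ Λ₂ => Subtype.ext <|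
    (Λ₁.2.1.eq_singleton_zero Λ₁.2.2).trans (Λ₂.2.1.eq_singleton_zero Λ₂.2.2).symm⟩

/-- `(Λ', i, j)` encodes `Λ' ∪ {μ + e_j}`, where `μ` is the `i`-th element of `Λ'`. -/
theorem exists_injective_succ (d n : ℕ) :
    ∃ f : DownwardClosedOfCard d (n + 2) →
        DownwardClosedOfCard d (n + 1) × Fin (n + 1) × Fin d,
      Function.Injective f := by
  let decode (x : DownwardClosedOfCard d (n + 1) × Fin (n + 1) × Fin d) :
      Finset (Fin d → ℕ) :=
    insert (((equivFinOfCardEq x.1.2.2).symm x.2.1 : Fin d → ℕ) + Pi.single x.2.2 1) x.1.1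
  have hdecode (Λ : DownwardClosedOfCard d (n + 2)) : ∃ x, decode x = Λ.1 := by
    obtain ⟨Λ', hΛ', hcard, μ, hμ, j, hinsert⟩ :=
      Λ.2.1.exists_eq_insert_add_single (by have := Λ.2.2; omega)
    have hcard' : #Λ' = n + 1 := by rw [Λ.2.2] at hcard; omega
    exact ⟨(⟨Λ', hΛ', hcard'⟩, equivFinOfCardEq hcard' ⟨μ, hμ⟩, j), by simpa [decode] using hinsert⟩
  choose f hf using hdecode
  exact ⟨f, fun Λ₁ Λ₂ h => Subtype.ext (by rw [← hf Λ₁, ← hf Λ₂, h])⟩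

theorem finite_succ (d n : ℕ) : Finite (DownwardClosedOfCard d (n + 1)) := by
  induction n with
  | zero => infer_instance
  | succ n ih =>
    obtain ⟨f, hf⟩ := exists_injective_succ d n
    exact Finite.of_injective f hf

theorem card_succ_le (d n : ℕ) :
    Nat.card (DownwardClosedOfCard d (n + 1)) ≤ d ^ n * n ! := by
  induction n with
  | zero => simpa using Finite.card_le_one_iff_subsingleton.mpr (subsingleton_one d)
  | succ n ih =>
    obtain ⟨f, hf⟩ := exists_injective_succ d n
    have := finite_succ d n
    calc Nat.card (DownwardClosedOfCard d (n + 2))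
        ≤ Nat.card (DownwardClosedOfCard d (n + 1) × Fin (n + 1) × Fin d) :=
          Nat.card_le_card_of_injective f hf
      _ = Nat.card (DownwardClosedOfCard d (n + 1)) * ((n + 1) * d) := by
          simp [Nat.card_prod]
      _ ≤ d ^ n * n ! * ((n + 1) * d) := Nat.mul_le_mul_right _ ih
      _ = d ^ (n + 1) * (n + 1)! := by rw [Nat.factorial_succ]; ring

end DownwardClosedOfCard

/-- The number of downward closed subsets of `ℕ₀^d` of cardinality exactly `n`
is at most `d^(n−1) (n−1)!`. -/
theorem card_downwardClosed_le_factorial (d n : ℕ) :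
    Nat.card {Λ : Finset (Fin d → ℕ) // DownwardClosed Λ ∧ Λ.card = n} ≤
      d ^ (n - 1) * Nat.factorial (n - 1) := by
  cases n with
  | zero =>
    exact (Finite.card_le_one_iff_subsingleton.mpr (DownwardClosedOfCard.subsingleton_zero d)).trans
      (by simp)
  | succ n => exact DownwardClosedOfCard.card_succ_le d n
end

section
/- The number of anchored subsets of the set F of finitely supported sequences in ℕ₀^ℕ with cardinality exactly n is at most ((n−1)!)², independently of any ambient dimension. -/
/-- `Λ` is downward closed (as a finite set of finitely supported multi-indices). -/
def DownwardClosedF (Λ : Finset (ℕ →₀ ℕ)) : Prop :=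
  ∀ ν ∈ Λ, ∀ μ : ℕ →₀ ℕ, μ ≤ ν → μ ∈ Λ

/-- `Λ` is anchored: downward closed, and containing `e_j` forces containing all `e_{j'}`
for `j' ≤ j`. -/
def Anchored (Λ : Finset (ℕ →₀ ℕ)) : Prop :=
  DownwardClosedF Λ ∧
    ∀ j j' : ℕ, Finsupp.single j 1 ∈ Λ → j' ≤ j → Finsupp.single j' 1 ∈ Λ

/-!
An anchored set `Λ` with `n + 1 ≥ 2` elements has a nonzero element `ν` whose removal leaves an
anchored set: a maximal element of `Λ` above `e_J`, where `J` is the largest index with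
`e_J ∈ Λ`. Since `e_0, …, e_j` and `0` lie in `Λ` whenever `e_j` does, every index in a support
is `< n`, so `ν = μ + e_j` with `μ ∈ Λ \ {ν}` and `j < n`. Hence `Λ` is recovered from the
anchored set `Λ \ {ν}` of size `n` together with at most `n²` choices of `(μ, j)`, and the
number of anchored sets of size `n + 1` is at most `n²` times the number of those of size `n`.
-/

open Finsupp

theorem Finsupp.single_one_le_of_mem_support {ν : ℕ →₀ ℕ} {j : ℕ} (hj : j ∈ ν.support) :
    single j 1 ≤ ν :=
  single_le_iff.2 (Nat.one_le_iff_ne_zero.2 (mem_support_iff.1 hj))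

namespace Anchored

open Finset

variable {Λ : Finset (ℕ →₀ ℕ)}

theorem zero_mem (hΛ : Anchored Λ) (hne : Λ.Nonempty) : 0 ∈ Λ :=
  hΛ.1 _ hne.choose_spec 0 zero_le

theorem add_two_le_card (hΛ : Anchored Λ) {j : ℕ} (hj : single j 1 ∈ Λ) : j + 2 ≤ Λ.card := by
  let e : ℕ ↪ (ℕ →₀ ℕ) := ⟨fun i => single i 1, single_left_injective one_ne_zero⟩
  have hsub : insert 0 ((range (j + 1)).map e) ⊆ Λ := by
    refine insert_subset (hΛ.zero_mem ⟨_, hj⟩) fun μ hμ => ?_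
    obtain ⟨i, hi, rfl⟩ := mem_map.1 hμ
    exact hΛ.2 j i hj (Nat.lt_succ_iff.1 (mem_range.1 hi))
  have h0 : (0 : ℕ →₀ ℕ) ∉ (range (j + 1)).map e := by simp [e]
  simpa [card_insert_of_notMem h0, Nat.succ_le_iff] using card_le_card hsub

theorem erase_of_maximal (hΛ : Anchored Λ) {ν : ℕ →₀ ℕ} {J : ℕ} (hν : Maximal (· ∈ Λ) ν)
    (hJν : single J 1 ≤ ν) (hJ : ∀ j, single j 1 ∈ Λ → j ≤ J) : Anchored (Λ.erase ν) := by
  refine ⟨fun ρ hρ μ hμρ => ?_, fun j j' hj hj'j => ?_⟩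
  · rw [mem_erase] at hρ ⊢
    refine ⟨?_, hΛ.1 ρ hρ.2 μ hμρ⟩
    rintro rfl
    exact hρ.1 (le_antisymm (hν.2 hρ.2 hμρ) hμρ)
  · rw [mem_erase] at hj ⊢
    refine ⟨fun hj'ν => ?_, hΛ.2 j j' hj.2 hj'j⟩
    subst hj'ν
    obtain rfl : J = j' := by
      by_contra hne
      simpa [single_apply, hne] using single_le_iff.1 hJν
    exact hj.1 (by rw [le_antisymm (hJ j hj.2) hj'j])

theorem exists_erase (hΛ : Anchored Λ) (h : 2 ≤ Λ.card) :
    ∃ ν ∈ Λ, ν ≠ 0 ∧ Anchored (Λ.erase ν) := by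
  obtain ⟨ρ, hρ, hρ0⟩ := exists_mem_ne h 0
  obtain ⟨k, hk⟩ := support_nonempty_iff.2 hρ0
  have hkΛ : single k 1 ∈ Λ := hΛ.1 ρ hρ _ (single_one_le_of_mem_support hk)
  have hbound : ∀ j, single j 1 ∈ Λ → j ≤ Λ.card := fun j hj => by
    have := hΛ.add_two_le_card hj
    omega
  set J := Nat.findGreatest (fun j => single j 1 ∈ Λ) Λ.card
  have hJ : single J 1 ∈ Λ :=
    Nat.findGreatest_spec (P := fun j => single j 1 ∈ Λ) (hbound k hkΛ) hkΛ
  obtain ⟨ν, hJν, hν⟩ := Λ.exists_le_maximal hJ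
  refine ⟨ν, hν.1, fun hν0 => ?_, hΛ.erase_of_maximal hν hJν
    fun j hj => Nat.le_findGreatest (hbound j hj) hj⟩
  simp [hν0] at hJν

theorem exists_eq_add_single (hΛ : Anchored Λ) {ν : ℕ →₀ ℕ} (hν : ν ∈ Λ) (hν0 : ν ≠ 0) :
    ∃ μ ∈ Λ.erase ν, ∃ j, j + 1 < Λ.card ∧ ν = μ + single j 1 := by
  obtain ⟨j, hj⟩ := support_nonempty_iff.2 hν0
  have hjν := single_one_le_of_mem_support hj
  have hμν : ν - single j 1 + single j 1 = ν := tsub_add_cancel_of_le hjν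
  have hμ : ν - single j 1 ≠ ν := fun h => by simp [h] at hμν
  have hcard := hΛ.add_two_le_card (hΛ.1 ν hν _ hjν)
  exact ⟨ν - single j 1, mem_erase.2 ⟨hμ, hΛ.1 ν hν _ tsub_le_self⟩, j, by omega, hμν.symm⟩

end Anchored

open Cardinal

def anchoredOfCard (n : ℕ) : Set (Finset (ℕ →₀ ℕ)) := {Λ | Anchored Λ ∧ Λ.card = n}

theorem mk_anchoredOfCard_succ_le {n : ℕ} (hn : 1 ≤ n) :
    #(anchoredOfCard (n + 1)) ≤ #(anchoredOfCard n) * (n * n : ℕ) := by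
  choose ν hν hν0 herase using fun Λ : anchoredOfCard (n + 1) =>
    Λ.2.1.exists_erase (by rw [Λ.2.2]; omega)
  let shrink : anchoredOfCard (n + 1) → anchoredOfCard n := fun Λ =>
    ⟨Λ.1.erase (ν Λ), herase Λ, by
      rw [Finset.card_erase_of_mem (hν Λ), Λ.2.2, Nat.add_sub_cancel]⟩
  refine mk_le_mk_mul_of_mk_preimage_le shrink fun Λ' => ?_
  let raised := Finset.image₂ (fun μ j => μ + single j 1) Λ'.1 (Finset.range n)
  have hraised : ∀ Λ ∈ shrink ⁻¹' {Λ'}, ν Λ ∈ raised := by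
    rintro Λ rfl
    obtain ⟨μ, hμ, j, hj, hνμ⟩ := Λ.2.1.exists_eq_add_single (hν Λ) (hν0 Λ)
    rw [Λ.2.2] at hj
    exact Finset.mem_image₂.2 ⟨μ, hμ, j, Finset.mem_range.2 (by omega), hνμ.symm⟩
  have hinj : Function.Injective fun Λ : shrink ⁻¹' {Λ'} => (⟨ν Λ, hraised Λ Λ.2⟩ : raised) := by
    rintro ⟨Λ₁, h₁⟩ ⟨Λ₂, h₂⟩ h
    have hν₁₂ : ν Λ₁ = ν Λ₂ := congrArg Subtype.val h
    have herase₁₂ : Λ₁.1.erase (ν Λ₁) = Λ₂.1.erase (ν Λ₂) :=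
      congrArg Subtype.val (h₁.trans h₂.symm)
    rw [Subtype.mk.injEq, Subtype.ext_iff, ← Finset.insert_erase (hν Λ₁),
      ← Finset.insert_erase (hν Λ₂), herase₁₂, hν₁₂]
  calc #(shrink ⁻¹' {Λ'}) ≤ #raised := mk_le_of_injective hinj
    _ = raised.card := mk_coe_finset
    _ ≤ (n * n : ℕ) := by
      have := Finset.card_image₂_le (fun μ j => μ + single j 1) Λ'.1 (Finset.range n)
      rw [Λ'.2.2, Finset.card_range] at this
      exact_mod_cast this

theorem anchoredOfCard_subsingleton {n : ℕ} (hn : n ≤ 1) : (anchoredOfCard n).Subsingleton := by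
  have hsub : ∀ Λ ∈ anchoredOfCard n, Λ = ∅ ∨ Λ = {0} := fun Λ hΛ =>
    Finset.subset_singleton_iff.1 fun ν hν =>
      Finset.mem_singleton.2 (Finset.card_le_one.1 (hΛ.2 ▸ hn) ν hν 0 (hΛ.1.zero_mem ⟨ν, hν⟩))
  intro Λ₁ h₁ Λ₂ h₂
  have hcard : Λ₁.card = Λ₂.card := h₁.2.trans h₂.2.symm
  rcases hsub Λ₁ h₁ with rfl | rfl <;> rcases hsub Λ₂ h₂ with rfl | rfl <;> simp_all

theorem mk_anchoredOfCard_le : ∀ n : ℕ, #(anchoredOfCard n) ≤ ((n - 1).factorial ^ 2 : ℕ)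
  | 0 => by simpa using mk_le_one_iff_set_subsingleton.2 (anchoredOfCard_subsingleton zero_le_one)
  | 1 => by simpa using mk_le_one_iff_set_subsingleton.2 (anchoredOfCard_subsingleton le_rfl)
  | n + 2 => calc
      #(anchoredOfCard (n + 2)) ≤ #(anchoredOfCard (n + 1)) * ((n + 1) * (n + 1) : ℕ) :=
        mk_anchoredOfCard_succ_le (Nat.le_add_left 1 n)
      _ ≤ (n.factorial ^ 2 : ℕ) * ((n + 1) * (n + 1) : ℕ) := by
        gcongr
        exact mk_anchoredOfCard_le (n + 1)
      _ = ((n + 1).factorial ^ 2 : ℕ) := by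
        push_cast [Nat.factorial_succ]
        ring

/-- The number of anchored subsets of the finitely supported sequences with cardinality
exactly `n` is at most `((n−1)!)²`. -/
theorem card_anchored_le (n : ℕ) :
    Nat.card {Λ : Finset (ℕ →₀ ℕ) // Anchored Λ ∧ Λ.card = n} ≤
      Nat.factorial (n - 1) ^ 2 :=
  (toNat_le_iff_of_lt_aleph0 _ ((mk_anchoredOfCard_le n).trans_lt natCast_lt_aleph0)).2
    (mk_anchoredOfCard_le n)
end

section
/- The union of all anchored sets of cardinality at most n (in the finitely supported sequences of ℕ₀^ℕ) is contained in the hyperbolic cross H_n^{n−1} = {μ ∈ ℕ₀^{n−1} : ∏_{j=1}^{n−1}(μ_j+1) ≤ n} (identifying sequences supported in {1,…,n−1} with elements of ℕ₀^{n−1}). -/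
/-!
A downward closed set containing `μ` contains the box `Iic μ`, which has `∏ (μ i + 1)` elements;
this gives the hyperbolic-cross bound. If `μ j ≠ 0`, then `e_j ≤ μ` lies in `Λ`, and anchoredness
puts `0, e_0, …, e_j` in `Λ`, so `j + 2 ≤ #Λ ≤ n`: the support of `μ` lies in `{0, …, n - 2}`.
-/

open Finset

theorem DownwardClosedF.Iic_subset {Λ : Finset (ℕ →₀ ℕ)} (hΛ : DownwardClosedF Λ)
    {μ : ℕ →₀ ℕ} (hμ : μ ∈ Λ) : Iic μ ⊆ Λ :=
  fun ν hν => hΛ μ hμ ν (mem_Iic.mp hν)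

theorem DownwardClosedF.prod_support_add_one_le_card {Λ : Finset (ℕ →₀ ℕ)}
    (hΛ : DownwardClosedF Λ) {μ : ℕ →₀ ℕ} (hμ : μ ∈ Λ) :
    ∏ i ∈ μ.support, (μ i + 1) ≤ #Λ :=
  calc ∏ i ∈ μ.support, (μ i + 1) = #(Iic μ) := by simp [Finsupp.card_Iic]
    _ ≤ #Λ := card_le_card (hΛ.Iic_subset hμ)

theorem card_insert_zero_image_single_one_range (j : ℕ) :
    #(insert (0 : ℕ →₀ ℕ) ((range (j + 1)).image fun i => Finsupp.single i 1)) = j + 2 := by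
  have hzero : (0 : ℕ →₀ ℕ) ∉ (range (j + 1)).image fun i => Finsupp.single i 1 := by simp
  rw [card_insert_of_notMem hzero,
    card_image_of_injective _ (Finsupp.single_left_injective one_ne_zero), card_range]

theorem Anchored.add_two_le_card_s11 {Λ : Finset (ℕ →₀ ℕ)} (hΛ : Anchored Λ) {j : ℕ}
    (hj : Finsupp.single j 1 ∈ Λ) : j + 2 ≤ #Λ := by
  have hsub : insert 0 ((range (j + 1)).image fun i => Finsupp.single i 1) ⊆ Λ := by
    intro ν hν
    simp only [mem_insert, mem_image, mem_range] at hν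
    rcases hν with rfl | ⟨i, hi, rfl⟩
    · exact hΛ.1 _ hj 0 zero_le
    · exact hΛ.2 j i hj (Nat.lt_succ_iff.mp hi)
  exact card_insert_zero_image_single_one_range j ▸ card_le_card hsub

theorem Anchored.add_two_le_card_of_apply_ne_zero {Λ : Finset (ℕ →₀ ℕ)} (hΛ : Anchored Λ)
    {μ : ℕ →₀ ℕ} (hμ : μ ∈ Λ) {j : ℕ} (hj : μ j ≠ 0) : j + 2 ≤ #Λ :=
  hΛ.add_two_le_card_s11
    (hΛ.1 μ hμ _ (Finsupp.single_le_iff.mpr (Nat.one_le_iff_ne_zero.mpr hj)))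

/-- Every element of an anchored set of cardinality at most `n` is supported in the
first `n − 1` coordinates and lies in the hyperbolic cross `H_n^{n−1}`
(identifying sequences supported in the first `n−1` coordinates with elements of
`ℕ₀^{n−1}`). -/
theorem anchored_subset_hyperbolicCross (n : ℕ) (Λ : Finset (ℕ →₀ ℕ))
    (hΛ : Anchored Λ) (hcard : Λ.card ≤ n) :
    ∀ μ ∈ Λ, (∀ j : ℕ, n - 1 ≤ j → μ j = 0) ∧
      ∏ j ∈ Finset.range (n - 1), (μ j + 1) ≤ n := by
  intro μ hμ
  have hvanish : ∀ j : ℕ, n - 1 ≤ j → μ j = 0 := fun j hj => by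
    by_contra hne
    have := hΛ.add_two_le_card_of_apply_ne_zero hμ hne
    omega
  have hsupport : μ.support ⊆ range (n - 1) := fun j hj => by
    by_contra hout
    exact Finsupp.mem_support_iff.mp hj (hvanish j (by simpa using hout))
  refine ⟨hvanish, ?_⟩
  calc ∏ j ∈ range (n - 1), (μ j + 1)
      = ∏ j ∈ μ.support, (μ j + 1) :=
        (prod_subset hsupport fun j _ hj => by simp [Finsupp.notMem_support_iff.mp hj]).symm
    _ ≤ #Λ := hΛ.1.prod_support_add_one_le_card hμ
    _ ≤ n := hcard
end

section
/- Under the same setting, for any downward closed Λ of cardinality n and any v ∈ P_Λ, one has ‖u − w_n‖ ≤ (1 + 2√(C_{2n−1}^d)) ‖u − v‖_{L^∞(Γ)}. -/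
open MeasureTheory

noncomputable def polySpace {d : ℕ} (Λ : Finset (Fin d → ℕ)) :
    Submodule ℝ ((Fin d → ℝ) → ℝ) :=
  Submodule.span ℝ {f | ∃ ν ∈ Λ, f = fun y => ∏ j, y j ^ ν j}

noncomputable def L2norm {d : ℕ} (ρ : Measure (Fin d → ℝ)) (f : (Fin d → ℝ) → ℝ) : ℝ :=
  Real.sqrt (∫ y, f y ^ 2 ∂ρ)

noncomputable def empNorm {d m : ℕ} (y : Fin m → (Fin d → ℝ)) (f : (Fin d → ℝ) → ℝ) : ℝ :=
  Real.sqrt ((∑ i, f (y i) ^ 2) / m)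

/-!
Let `Λ ∪ Λopt` (downward closed, of cardinality at most `2n − 1` since both sets contain `0`) be
enlarged to a downward closed `T` of cardinality exactly `2n − 1`, so that `v − w ∈ P_T`. Optimality
of `w` and the sup bound give `‖v − w‖_m ≤ ‖v − u‖_m + ‖u − w‖_m ≤ 2 ‖u − v‖_m ≤ 2B`, the constant
`C` turns this into `‖v − w‖ ≤ 2 √C B`, and `‖u − w‖ ≤ ‖u − v‖ + ‖v − w‖` with `‖u − v‖ ≤ B`.
-/

namespace DownwardClosed

variable {d : ℕ}

theorem union {S S' : Finset (Fin d → ℕ)} (hS : DownwardClosed S) (hS' : DownwardClosed S') :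
    DownwardClosed (S ∪ S') := by
  intro ν hν μ hle
  rcases Finset.mem_union.1 hν with h | h
  · exact Finset.mem_union_left _ (hS ν h μ hle)
  · exact Finset.mem_union_right _ (hS' ν h μ hle)

theorem zero_mem_s14 {S : Finset (Fin d → ℕ)} (hS : DownwardClosed S) (hne : S.Nonempty) :
    0 ∈ S :=
  let ⟨ν, hν⟩ := hne
  hS ν hν 0 fun _ => Nat.zero_le _

theorem card_union_le {S S' : Finset (Fin d → ℕ)} {n : ℕ} (hS : DownwardClosed S)
    (hS' : DownwardClosed S') (hc : S.card = n) (hc' : S'.card = n) :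
    (S ∪ S').card ≤ 2 * n - 1 := by
  rcases Nat.eq_zero_or_pos n with rfl | hn
  · simp_all
  have h0 : 0 ∈ S ∩ S' := Finset.mem_inter.2
    ⟨hS.zero_mem_s14 (Finset.card_pos.1 (by omega)), hS'.zero_mem_s14 (Finset.card_pos.1 (by omega))⟩
  have hsum := Finset.card_union_add_card_inter S S'
  have hinter := Finset.card_pos.2 ⟨0, h0⟩
  omega

/-- Any minimal multi-index outside `T` can be added; one exists as `Fin d → ℕ` is infinite and
well-founded. -/
theorem exists_insert (hd : 1 ≤ d) {T : Finset (Fin d → ℕ)} (hT : DownwardClosed T) :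
    ∃ μ ∉ T, DownwardClosed (insert μ T) := by
  have : Nonempty (Fin d) := ⟨⟨0, hd⟩⟩
  obtain ⟨μ, hmin⟩ := exists_minimal_of_wellFoundedLT (· ∉ T) (Infinite.exists_notMem_finset T)
  refine ⟨μ, hmin.prop, fun ν hν ν' hle => ?_⟩
  rcases Finset.mem_insert.1 hν with rfl | hνT
  · rcases hle.eq_or_lt with rfl | hlt
    · exact Finset.mem_insert_self _ _
    · exact Finset.mem_insert_of_mem (not_not.1 fun h => hmin.not_lt h hlt)
  · exact Finset.mem_insert_of_mem (hT ν hνT ν' hle)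

theorem exists_superset_card_eq (hd : 1 ≤ d) {S : Finset (Fin d → ℕ)} (hS : DownwardClosed S)
    {k : ℕ} (hk : S.card ≤ k) : ∃ T, S ⊆ T ∧ DownwardClosed T ∧ T.card = k := by
  induction k, hk using Nat.le_induction with
  | base => exact ⟨S, subset_rfl, hS, rfl⟩
  | succ k _ ih =>
    obtain ⟨T, hST, hT, hTc⟩ := ih
    obtain ⟨μ, hμ, hins⟩ := hT.exists_insert hd
    exact ⟨insert μ T, hST.trans (Finset.subset_insert _ _), hins,
      by rw [Finset.card_insert_of_notMem hμ, hTc]⟩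

end DownwardClosed

section Polynomials

variable {d : ℕ}

theorem polySpace_mono {Λ Λ' : Finset (Fin d → ℕ)} (h : Λ ⊆ Λ') : polySpace Λ ≤ polySpace Λ' :=
  Submodule.span_mono fun _ ⟨ν, hν, hf⟩ => ⟨ν, h hν, hf⟩

theorem abs_monomial_le_one (ν : Fin d → ℕ) {z : Fin d → ℝ} (hz : ∀ j, |z j| ≤ 1) :
    |∏ j, z j ^ ν j| ≤ 1 := by
  rw [Finset.abs_prod]
  exact Finset.prod_le_one (fun j _ => abs_nonneg _)
    fun j _ => (abs_pow (z j) (ν j)).symm ▸ pow_le_one₀ (abs_nonneg _) (hz j)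

theorem memLp_of_mem_polySpace {ρ : Measure (Fin d → ℝ)} [IsFiniteMeasure ρ]
    (hsupp : ∀ᵐ z ∂ρ, ∀ j, |z j| ≤ 1) {Λ : Finset (Fin d → ℕ)} {p : (Fin d → ℝ) → ℝ}
    (hp : p ∈ polySpace Λ) : MemLp p 2 ρ := by
  induction hp using Submodule.span_induction with
  | mem f hf =>
    obtain ⟨ν, -, rfl⟩ := hf
    exact MemLp.of_bound
      (by fun_prop : Continuous fun z : Fin d → ℝ => ∏ j, z j ^ ν j).aestronglyMeasurable 1 (hsupp.mono fun z hz => abs_monomial_le_one ν hz)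
  | zero => exact MemLp.zero
  | add f g _ _ hf hg => exact hf.add hg
  | smul c f _ hf => exact hf.const_smul c

end Polynomials

section Norms

variable {d m : ℕ}

theorem L2norm_eq_toReal_eLpNorm {ρ : Measure (Fin d → ℝ)} {f : (Fin d → ℝ) → ℝ}
    (hf : MemLp f 2 ρ) : L2norm ρ f = (eLpNorm f 2 ρ).toReal := by
  rw [hf.eLpNorm_eq_integral_rpow_norm two_ne_zero ENNReal.ofNat_ne_top,
    ENNReal.toReal_ofReal (by positivity), L2norm, Real.sqrt_eq_rpow]
  norm_num [Real.norm_eq_abs]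

theorem L2norm_add_le {ρ : Measure (Fin d → ℝ)} {f g : (Fin d → ℝ) → ℝ}
    (hf : MemLp f 2 ρ) (hg : MemLp g 2 ρ) : L2norm ρ (f + g) ≤ L2norm ρ f + L2norm ρ g := by
  rw [L2norm_eq_toReal_eLpNorm (hf.add hg), L2norm_eq_toReal_eLpNorm hf,
    L2norm_eq_toReal_eLpNorm hg, ← ENNReal.toReal_add hf.2.ne hg.2.ne]
  exact ENNReal.toReal_mono (ENNReal.add_ne_top.2 ⟨hf.2.ne, hg.2.ne⟩)
    (eLpNorm_add_le hf.1 hg.1 one_le_two)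

theorem L2norm_le_of_ae_abs_le {ρ : Measure (Fin d → ℝ)} [IsProbabilityMeasure ρ]
    {f : (Fin d → ℝ) → ℝ} {B : ℝ} (hB : 0 ≤ B) (hf : ∀ᵐ z ∂ρ, |f z| ≤ B) : L2norm ρ f ≤ B := by
  rw [L2norm, Real.sqrt_le_left hB]
  calc ∫ z, f z ^ 2 ∂ρ ≤ ∫ _, B ^ 2 ∂ρ :=
        integral_mono_of_nonneg (.of_forall fun z => sq_nonneg (f z)) (integrable_const _)
          (hf.mono fun z hz => sq_le_sq.2 (hz.trans (le_abs_self B)))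
    _ = B ^ 2 := by simp

theorem empNorm_eq_norm_div_sqrt (y : Fin m → Fin d → ℝ) (f : (Fin d → ℝ) → ℝ) :
    empNorm y f = ‖WithLp.toLp 2 fun i => f (y i)‖ / √m := by
  simp [empNorm, EuclideanSpace.norm_eq, Real.sqrt_div' _ (Nat.cast_nonneg m)]

theorem empNorm_add_le (y : Fin m → Fin d → ℝ) (f g : (Fin d → ℝ) → ℝ) :
    empNorm y (f + g) ≤ empNorm y f + empNorm y g := by
  simp only [empNorm_eq_norm_div_sqrt, ← add_div]
  gcongr
  exact norm_add_le (WithLp.toLp 2 fun i => f (y i)) (WithLp.toLp 2 fun i => g (y i))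

theorem empNorm_sub_comm (y : Fin m → Fin d → ℝ) (f g : (Fin d → ℝ) → ℝ) :
    empNorm y (f - g) = empNorm y (g - f) := by
  simp only [empNorm, Pi.sub_apply, sub_sq_comm (f _)]

theorem empNorm_le_of_forall_abs_le (y : Fin m → Fin d → ℝ) {f : (Fin d → ℝ) → ℝ} {B : ℝ}
    (hB : 0 ≤ B) (hf : ∀ i, |f (y i)| ≤ B) : empNorm y f ≤ B := by
  rw [empNorm, Real.sqrt_le_left hB]
  refine div_le_of_le_mul₀ (Nat.cast_nonneg m) (sq_nonneg B) ?_
  calc ∑ i, f (y i) ^ 2 ≤ ∑ _ : Fin m, B ^ 2 :=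
        Finset.sum_le_sum fun i _ => sq_le_sq.2 ((hf i).trans (le_abs_self B))
    _ = B ^ 2 * m := by simp [mul_comm]

end Norms

theorem le_sqrt_mul_of_sq_le_mul {a b C : ℝ} (ha : 0 ≤ a) (hb : 0 ≤ b) (h : a ^ 2 ≤ C * b ^ 2) :
    a ≤ √C * b :=
  calc a = √(a ^ 2) := (Real.sqrt_sq ha).symm
    _ ≤ √(C * b ^ 2) := Real.sqrt_le_sqrt h
    _ = √C * b := by rw [Real.sqrt_mul' C (sq_nonneg b), Real.sqrt_sq hb]

theorem optimized_ls_sup_comparison_general (d n m : ℕ) (hd : 1 ≤ d)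
    (ρ : Measure (Fin d → ℝ)) [IsProbabilityMeasure ρ]
    (hsupp : ∀ᵐ z ∂ρ, ∀ j, |z j| ≤ 1)
    (u : (Fin d → ℝ) → ℝ) (hu : MemLp u 2 ρ)
    (y : Fin m → (Fin d → ℝ)) (hy : ∀ i, ∀ j, |y i j| ≤ 1)
    (C : ℝ)
    (hC : ∀ Λ' : Finset (Fin d → ℕ), DownwardClosed Λ' → Λ'.card = 2 * n - 1 →
      ∀ p ∈ polySpace Λ', (L2norm ρ p) ^ 2 ≤ C * (empNorm y p) ^ 2)
    (Λopt : Finset (Fin d → ℕ)) (hΛopt : DownwardClosed Λopt) (hcopt : Λopt.card = n)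
    (w : (Fin d → ℝ) → ℝ) (hw : w ∈ polySpace Λopt)
    (hwmin : ∀ Λ' : Finset (Fin d → ℕ), DownwardClosed Λ' → Λ'.card = n →
      ∀ v' ∈ polySpace Λ', empNorm y (u - w) ≤ empNorm y (u - v'))
    (Λ : Finset (Fin d → ℕ)) (hΛ : DownwardClosed Λ) (hc : Λ.card = n)
    (v : (Fin d → ℝ) → ℝ) (hv : v ∈ polySpace Λ)
    (B : ℝ) (hB : ∀ z : Fin d → ℝ, (∀ j, |z j| ≤ 1) → |u z - v z| ≤ B) :
    L2norm ρ (u - w) ≤ (1 + 2 * Real.sqrt C) * B := by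
  have hB0 : 0 ≤ B := (abs_nonneg _).trans (hB 0 fun j => by simp)
  obtain ⟨T, hUT, hT, hTcard⟩ :=
    (hΛ.union hΛopt).exists_superset_card_eq hd (hΛ.card_union_le hΛopt hc hcopt)
  have hvwT : v - w ∈ polySpace T := sub_mem
    (polySpace_mono (Finset.subset_union_left.trans hUT) hv)
    (polySpace_mono (Finset.subset_union_right.trans hUT) hw)
  have hemp_uv : empNorm y (u - v) ≤ B := empNorm_le_of_forall_abs_le y hB0 fun i => hB _ (hy i)
  have hemp_vw : empNorm y (v - w) ≤ 2 * B :=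
    calc empNorm y (v - w) = empNorm y ((v - u) + (u - w)) := by rw [sub_add_sub_cancel]
      _ ≤ empNorm y (v - u) + empNorm y (u - w) := empNorm_add_le y _ _
      _ ≤ B + B := add_le_add (empNorm_sub_comm y v u ▸ hemp_uv)
          ((hwmin Λ hΛ hc v hv).trans hemp_uv)
      _ = 2 * B := (two_mul B).symm
  have hL2_vw : L2norm ρ (v - w) ≤ √C * (2 * B) :=
    (le_sqrt_mul_of_sq_le_mul (Real.sqrt_nonneg _) (Real.sqrt_nonneg _)
      (hC T hT hTcard _ hvwT)).trans (mul_le_mul_of_nonneg_left hemp_vw (Real.sqrt_nonneg C))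
  have hL2_uv : L2norm ρ (u - v) ≤ B := L2norm_le_of_ae_abs_le hB0 (hsupp.mono fun z => hB z)
  have hv2 := memLp_of_mem_polySpace hsupp hv
  have hw2 := memLp_of_mem_polySpace hsupp hw
  calc L2norm ρ (u - w) = L2norm ρ ((u - v) + (v - w)) := by rw [sub_add_sub_cancel]
    _ ≤ L2norm ρ (u - v) + L2norm ρ (v - w) := L2norm_add_le (hu.sub hv2) (hv2.sub hw2)
    _ ≤ B + √C * (2 * B) := add_le_add hL2_uv hL2_vw
    _ = (1 + 2 * Real.sqrt C) * B := by ring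

/-- For any downward closed `Λ` of cardinality `n` and any `v ∈ P_Λ`,
`‖u − w_n‖ ≤ (1 + 2√(C_{2n−1}^d)) ‖u − v‖_{L^∞(Γ)}`, where the sup norm over
`Γ = [−1,1]^d` is expressed through an arbitrary upper bound `B` of `|u − v|` on `Γ`. -/
theorem optimized_ls_sup_comparison (d n m : ℕ) (hd : 1 ≤ d) (hn : 1 ≤ n) (hm : 1 ≤ m)
    (ρ : Measure (Fin d → ℝ)) [IsProbabilityMeasure ρ]
    (hsupp : ∀ᵐ z ∂ρ, ∀ j, |z j| ≤ 1)
    (u : (Fin d → ℝ) → ℝ) (hu : MemLp u 2 ρ)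
    (y : Fin m → (Fin d → ℝ)) (hy : ∀ i, ∀ j, |y i j| ≤ 1)
    (C : ℝ) (hC0 : 0 ≤ C)
    (hC : ∀ Λ' : Finset (Fin d → ℕ), DownwardClosed Λ' → Λ'.card = 2 * n - 1 →
      ∀ p ∈ polySpace Λ', (L2norm ρ p) ^ 2 ≤ C * (empNorm y p) ^ 2)
    (Λopt : Finset (Fin d → ℕ)) (hΛopt : DownwardClosed Λopt) (hcopt : Λopt.card = n)
    (w : (Fin d → ℝ) → ℝ) (hw : w ∈ polySpace Λopt)
    (hwmin : ∀ Λ' : Finset (Fin d → ℕ), DownwardClosed Λ' → Λ'.card = n →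
      ∀ v' ∈ polySpace Λ', empNorm y (u - w) ≤ empNorm y (u - v'))
    (Λ : Finset (Fin d → ℕ)) (hΛ : DownwardClosed Λ) (hc : Λ.card = n)
    (v : (Fin d → ℝ) → ℝ) (hv : v ∈ polySpace Λ)
    (B : ℝ) (hB : ∀ z : Fin d → ℝ, (∀ j, |z j| ≤ 1) → |u z - v z| ≤ B) :
    L2norm ρ (u - w) ≤ (1 + 2 * Real.sqrt C) * B :=
  optimized_ls_sup_comparison_general d n m hd ρ hsupp u hu y hy C hC Λopt hΛopt hcopt w hw hwmin Λ
    hΛ hc v hv B hB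
end

section
/- For tensorized Chebyshev polynomials of the first kind on Γ = [−1,1]^d and any finite downward closed set Λ ⊆ ℕ₀^d, one has K(P_Λ) = sup_{y∈Γ} ∑_{ν∈Λ} |J_ν(y)|² ≤ (#Λ)^{ln 3 / ln 2}. -/
/-- The univariate orthonormal Chebyshev polynomials of the first kind:
`J 0 = 1`, `J k t = √2 cos(k arccos t)` for `k ≥ 1`. -/
noncomputable def chebJ (k : ℕ) (t : ℝ) : ℝ :=
  if k = 0 then 1 else Real.sqrt 2 * Real.cos (k * Real.arccos t)

/-!
Since `J_k² ≤ 2` for `k ≥ 1`, the `ν`-th term is at most `2 ^ #{j | ν j ≠ 0}`, and it suffices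
to show `∑_{ν ∈ Λ} w ^ #{j | ν j ≠ 0} ≤ (#Λ)^p` whenever `p ≥ 1` and `w = 2^p - 1`
(here `p = log 3 / log 2`, `w = 2`). Slicing `Λ` along its last coordinate gives downward closed
slices `Λ_0 ⊇ Λ_1 ⊇ ⋯`, so by induction on `d` the claim reduces to
`a^p + w ∑ b_k^p ≤ (a + ∑ b_k)^p` for `0 ≤ b_k ≤ a`. Adding the `b_k` one at a time, this is
`(2b)^p - b^p ≤ (a + b)^p - a^p` for `b ≤ a`: the increments of the convex function `x ↦ x^p`
over intervals of a fixed length grow as the interval moves to the right.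
-/

open Finset

theorem ConvexOn.map_add_sub_map_le_of_le {𝕜 : Type*} [Field 𝕜] [LinearOrder 𝕜]
    [IsStrictOrderedRing 𝕜] {s : Set 𝕜} {f : 𝕜 → 𝕜} (hf : ConvexOn 𝕜 s f) {x y h : 𝕜} (hx : x ∈ s)
    (hyh : y + h ∈ s) (hxy : x ≤ y) (hh : 0 ≤ h) : f (x + h) - f x ≤ f (y + h) - f y := by
  rcases hh.eq_or_lt with rfl | hh
  · simp
  have hxh : x + h ∈ s := hf.1.ordConnected.out hx hyh ⟨by linarith, by linarith⟩
  have hy : y ∈ s := hf.1.ordConnected.out hx hyh ⟨hxy, by linarith⟩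
  have h₁ := hf.secant_mono hx hxh hyh (by linarith) (by linarith) (by linarith)
  have h₂ := hf.secant_mono hyh hx hy (by linarith) (by linarith) hxy
  have e₁ : (f x - f (y + h)) / (x - (y + h)) = (f (y + h) - f x) / (y + h - x) := by
    rw [← neg_sub (f (y + h)), ← neg_sub (y + h), neg_div_neg_eq]
  have e₂ : (f y - f (y + h)) / (y - (y + h)) = (f (y + h) - f y) / h := by
    rw [← neg_sub (f (y + h)), ← neg_sub (y + h), neg_div_neg_eq, add_sub_cancel_left]
  rw [add_sub_cancel_left] at h₁
  rw [e₁, e₂] at h₂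
  exact (div_le_div_iff_of_pos_right hh).1 (h₁.trans h₂)

namespace Real

theorem rpow_add_mul_rpow_le_add_rpow {p a b : ℝ} (hp : 1 ≤ p) (hb : 0 ≤ b) (hba : b ≤ a) :
    a ^ p + (2 ^ p - 1) * b ^ p ≤ (a + b) ^ p := by
  have h := (convexOn_rpow hp).map_add_sub_map_le_of_le (Set.mem_Ici.2 hb)
    (Set.mem_Ici.2 (by linarith : 0 ≤ a + b)) hba hb
  rw [← two_mul, mul_rpow zero_le_two hb] at h
  linarith

theorem rpow_add_mul_sum_rpow_le_add_sum_rpow {ι : Type*} {p a : ℝ} (hp : 1 ≤ p) (s : Finset ι)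
    {b : ι → ℝ} (hb : ∀ i ∈ s, 0 ≤ b i ∧ b i ≤ a) :
    a ^ p + (2 ^ p - 1) * ∑ i ∈ s, b i ^ p ≤ (a + ∑ i ∈ s, b i) ^ p := by
  induction s using Finset.cons_induction generalizing a with
  | empty => simp
  | cons i s hi ih =>
    obtain ⟨hbi, hbia⟩ := hb i (mem_cons_self i s)
    have hs : ∀ j ∈ s, 0 ≤ b j ∧ b j ≤ a + b i := fun j hj =>
      have := hb j (mem_cons_of_mem hj); ⟨this.1, by linarith⟩
    calc a ^ p + (2 ^ p - 1) * ∑ j ∈ cons i s hi, b j ^ p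
        = (a ^ p + (2 ^ p - 1) * b i ^ p) + (2 ^ p - 1) * ∑ j ∈ s, b j ^ p := by
          rw [sum_cons]; ring
      _ ≤ (a + b i) ^ p + (2 ^ p - 1) * ∑ j ∈ s, b j ^ p := by
          gcongr; exact rpow_add_mul_rpow_le_add_rpow hp hbi hbia
      _ ≤ (a + b i + ∑ j ∈ s, b j) ^ p := ih hs
      _ = (a + ∑ j ∈ cons i s hi, b j) ^ p := by rw [sum_cons, add_assoc]

end Real

noncomputable def supportWeight {d : ℕ} (w : ℝ) (ν : Fin d → ℕ) : ℝ :=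
  ∏ j, if ν j = 0 then 1 else w

theorem supportWeight_snoc {d : ℕ} (w : ℝ) (ν : Fin d → ℕ) (k : ℕ) :
    supportWeight w (Fin.snoc ν k : Fin (d + 1) → ℕ) =
      (if k = 0 then 1 else w) * supportWeight w ν := by
  simp [supportWeight, Fin.prod_univ_castSucc, mul_comm]

noncomputable def Finset.sliceLast {d : ℕ} (Λ : Finset (Fin (d + 1) → ℕ)) (k : ℕ) :
    Finset (Fin d → ℕ) :=
  Λ.preimage (Fin.snoc · k) (Fin.snoc_left_injective (α := fun _ => ℕ) k).injOn

theorem Finset.mem_sliceLast {d : ℕ} {Λ : Finset (Fin (d + 1) → ℕ)} {k : ℕ} {ν : Fin d → ℕ} :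
    ν ∈ Λ.sliceLast k ↔ (Fin.snoc ν k : Fin (d + 1) → ℕ) ∈ Λ :=
  mem_preimage

theorem Fin.snoc_le_snoc {α : Type*} [LE α] {d : ℕ} {μ ν : Fin d → α} {j k : α} (hμν : μ ≤ ν)
    (hjk : j ≤ k) :
    (Fin.snoc μ j : Fin (d + 1) → α) ≤ Fin.snoc ν k := by
  simpa [Pi.le_def, Fin.forall_iff_castSucc] using And.intro hjk hμν

theorem DownwardClosed.sliceLast {d : ℕ} {Λ : Finset (Fin (d + 1) → ℕ)} (hΛ : DownwardClosed Λ)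
    (k : ℕ) : DownwardClosed (Λ.sliceLast k) := fun _ hν _ hμν =>
  mem_sliceLast.2 (hΛ _ (mem_sliceLast.1 hν) _ (Fin.snoc_le_snoc hμν le_rfl))

theorem DownwardClosed.antitone_sliceLast {d : ℕ} {Λ : Finset (Fin (d + 1) → ℕ)}
    (hΛ : DownwardClosed Λ) : Antitone Λ.sliceLast := fun _ _ hjk _ hν =>
  mem_sliceLast.2 (hΛ _ (mem_sliceLast.1 hν) _ (Fin.snoc_le_snoc le_rfl hjk))

theorem sum_eq_sum_range_sum_sliceLast {β : Type*} [AddCommMonoid β] {d : ℕ}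
    (Λ : Finset (Fin (d + 1) → ℕ)) (F : (Fin (d + 1) → ℕ) → β) :
    ∑ ν ∈ Λ, F ν =
      ∑ k ∈ range (Λ.sup (· (Fin.last d)) + 1), ∑ ν ∈ Λ.sliceLast k, F (Fin.snoc ν k) := by
  rw [← sum_fiberwise_of_maps_to (g := (· (Fin.last d)))
    fun ν hν => mem_range_succ_iff.2 (le_sup (f := (· (Fin.last d))) hν)]
  refine sum_congr rfl fun k _ =>
    sum_nbij' Fin.init (fun ν => (Fin.snoc ν k : Fin (d + 1) → ℕ))
    ?_ (fun ν hν => by simpa [mem_sliceLast] using hν) ?_ (fun ν _ => Fin.init_snoc _ _) ?_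
  all_goals
    intro ν hν
    obtain ⟨hνΛ, rfl⟩ := mem_filter.1 hν
    simp [mem_sliceLast, hνΛ]

theorem sum_supportWeight_le_card_rpow {p : ℝ} (hp : 1 ≤ p) {d : ℕ} {Λ : Finset (Fin d → ℕ)}
    (hΛ : DownwardClosed Λ) : ∑ ν ∈ Λ, supportWeight (2 ^ p - 1) ν ≤ (Λ.card : ℝ) ^ p := by
  induction d with
  | zero =>
    have hcard : Λ.card ≤ 1 := card_le_one_of_subsingleton Λ
    simp only [supportWeight, univ_eq_empty, prod_empty, sum_const, nsmul_one]
    interval_cases Λ.card <;> simp [Real.zero_rpow (by linarith : p ≠ 0)]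
  | succ d ih =>
    set w : ℝ := 2 ^ p - 1
    have hw : 0 ≤ w := sub_nonneg.2 (Real.one_le_rpow one_le_two (by linarith))
    set M := Λ.sup (· (Fin.last d))
    set L := Λ.sliceLast
    have hsum : ∑ ν ∈ Λ, supportWeight w ν =
        ∑ ν ∈ L 0, supportWeight w ν + w * ∑ k ∈ range M, ∑ ν ∈ L (k + 1), supportWeight w ν := by
      rw [sum_eq_sum_range_sum_sliceLast, sum_range_succ', add_comm]
      simp [supportWeight_snoc, ← mul_sum, L, M]
    have hcard : (Λ.card : ℝ) = (L 0).card + ∑ k ∈ range M, ((L (k + 1)).card : ℝ) := by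
      rw [card_eq_sum_ones, sum_eq_sum_range_sum_sliceLast, sum_range_succ', add_comm]
      simp [L, M]
    rw [hsum, hcard]
    calc _ ≤ ((L 0).card : ℝ) ^ p + w * ∑ k ∈ range M, ((L (k + 1)).card : ℝ) ^ p := by
          gcongr with k
          exacts [ih (hΛ.sliceLast 0), ih (hΛ.sliceLast _)]
      _ ≤ _ := Real.rpow_add_mul_sum_rpow_le_add_sum_rpow hp _ fun k _ =>
          ⟨by positivity, by exact_mod_cast card_le_card (hΛ.antitone_sliceLast (Nat.zero_le _))⟩

theorem chebJ_sq_le (k : ℕ) (t : ℝ) : chebJ k t ^ 2 ≤ if k = 0 then 1 else 2 := by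
  unfold chebJ
  split_ifs
  · norm_num
  · rw [mul_pow, Real.sq_sqrt zero_le_two]
    nlinarith [Real.cos_sq_le_one (k * Real.arccos t)]

theorem sq_prod_chebJ_le_supportWeight {d : ℕ} (ν : Fin d → ℕ) (y : Fin d → ℝ) :
    (∏ j, chebJ (ν j) (y j)) ^ 2 ≤ supportWeight 2 ν := by
  rw [← prod_pow]
  exact prod_le_prod (fun j _ => sq_nonneg _) fun j _ => chebJ_sq_le _ _

theorem chebyshev_K_bound_general (d : ℕ) (Λ : Finset (Fin d → ℕ)) (hΛ : DownwardClosed Λ)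
    (y : Fin d → ℝ) :
    ∑ ν ∈ Λ, (∏ j, chebJ (ν j) (y j)) ^ 2 ≤
      (Λ.card : ℝ) ^ (Real.log 3 / Real.log 2) := by
  have h_two_rpow : (2 : ℝ) ^ (Real.log 3 / Real.log 2) = 3 :=
    Real.rpow_logb zero_lt_two (by norm_num) three_pos
  have hp_ge : 1 ≤ Real.log 3 / Real.log 2 := by
    rw [← Real.rpow_le_rpow_left_iff one_lt_two, Real.rpow_one, h_two_rpow]; norm_num
  calc ∑ ν ∈ Λ, (∏ j, chebJ (ν j) (y j)) ^ 2 ≤ ∑ ν ∈ Λ, supportWeight 2 ν :=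
        sum_le_sum fun ν _ => sq_prod_chebJ_le_supportWeight ν y
    _ = ∑ ν ∈ Λ, supportWeight (2 ^ (Real.log 3 / Real.log 2) - 1) ν := by norm_num [h_two_rpow]
    _ ≤ _ := sum_supportWeight_le_card_rpow hp_ge hΛ

/-- For tensorized Chebyshev polynomials and any finite downward closed `Λ ⊆ ℕ₀^d`,
`K(P_Λ) = sup_{y∈[−1,1]^d} ∑_{ν∈Λ} |J_ν(y)|² ≤ (#Λ)^{ln 3 / ln 2}`. -/
theorem chebyshev_K_bound (d : ℕ) (Λ : Finset (Fin d → ℕ)) (hΛ : DownwardClosed Λ)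
    (y : Fin d → ℝ) (hy : ∀ j, y j ∈ Set.Icc (-1 : ℝ) 1) :
    ∑ ν ∈ Λ, (∏ j, chebJ (ν j) (y j)) ^ 2 ≤
      (Λ.card : ℝ) ^ (Real.log 3 / Real.log 2) :=
  chebyshev_K_bound_general d Λ hΛ y
end
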